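/- Let S_λ be a weighted shift on a directed tree T with weights λ = {λ_v}_{v∈V°} such that the linear span of {e_u : u ∈ V} is contained in D^∞(S_λ), and let u ∈ V have at least one child. Suppose for every v ∈ Chi(u) the sequence {‖S_λ^n e_v‖²}_{n=0}^∞ is a Stieltjes moment sequence with a representing measure μ_v. If S_λ satisfies the consistency condition at u, i.e. ∑_{v∈Chi(u)} |λ_v|² ∫_{[0,∞)} (1/s) dμ_v(s) ≤ 1, then {‖S_λ^n e_u‖²}_{n=0}^∞ is a Stieltjes moment sequence and the positive Borel measure μ_u on [0,∞) defined by μ_u(σ) = ∑_{v∈Chi(u)} |λ_v|² ∫_σ (1/s) dμ_v(s) + ε_u δ₀(σ), with ε_u = 1 − ∑_{v∈Chi(u)} |λ_v|² ∫_{[0,∞)} (1/s) dμ_v(s), is a representing measure of {‖S_λ^n e_u‖²}_{n=0}^∞. -/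

import Mathlib

open MeasureTheory ENNReal
open scoped NNReal
noncomputable section

/-- `μ` is a representing measure of the sequence `t`. -/
def IsRepMeasure (μ : Measure ℝ≥0) (t : ℕ → ℝ) : Prop :=
  ∀ n : ℕ, Integrable (fun s : ℝ≥0 => (s : ℝ) ^ n) μ ∧ t n = ∫ s, (s : ℝ) ^ n ∂μ

/-- `t` is a Stieltjes moment sequence. -/
def IsStieltjesMoment (t : ℕ → ℝ) : Prop := ∃ μ : Measure ℝ≥0, IsRepMeasure μ t

/-- `t` is a determinate Stieltjes moment sequence. -/
def IsDetStieltjesMoment (t : ℕ → ℝ) : Prop := ∃! μ : Measure ℝ≥0, IsRepMeasure μ t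

section Operators

universe u
variable {H : Type u} [NormedAddCommGroup H] [InnerProductSpace ℂ H]

/-- The maximal domain of the composition `S ∘ T`. -/
def compDomain (S T : H →ₗ.[ℂ] H) : Submodule ℂ H where
  carrier := {x | ∃ hx : x ∈ T.domain, T ⟨x, hx⟩ ∈ S.domain}
  zero_mem' := ⟨T.domain.zero_mem, by
    have h0 : (⟨0, T.domain.zero_mem⟩ : T.domain) = 0 := rfl
    rw [h0, LinearPMap.map_zero]; exact S.domain.zero_mem⟩
  add_mem' := by
    rintro x y ⟨hx, hx'⟩ ⟨hy, hy'⟩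
    refine ⟨T.domain.add_mem hx hy, ?_⟩
    have : (⟨x + y, T.domain.add_mem hx hy⟩ : T.domain) = ⟨x, hx⟩ + ⟨y, hy⟩ := rfl
    rw [this, LinearPMap.map_add]
    exact S.domain.add_mem hx' hy'
  smul_mem' := by
    rintro c x ⟨hx, hx'⟩
    refine ⟨T.domain.smul_mem c hx, ?_⟩
    have : (⟨c • x, T.domain.smul_mem c hx⟩ : T.domain) = c • (⟨x, hx⟩ : T.domain) := rfl
    rw [this, LinearPMap.map_smul]
    exact S.domain.smul_mem c hx'

/-- Composition `S ∘ T` of partial operators, on the maximal domain. -/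
def pmapComp (S T : H →ₗ.[ℂ] H) : H →ₗ.[ℂ] H :=
  S.comp (T.domRestrict (compDomain S T)) (by
    rintro ⟨x, hx⟩
    have hxT : x ∈ T.domain := (Submodule.mem_inf.mp hx).2
    have hxD : x ∈ compDomain S T := (Submodule.mem_inf.mp hx).1
    first
    | exact hxD.choose_spec
    | (erw [LinearPMap.domRestrict_apply (show ((⟨x, hx⟩ : ↥(compDomain S T ⊓ T.domain)) : H)
      = ((⟨x, hxT⟩ : T.domain) : H) from rfl)]
       exact hxD.choose_spec))

/-- Powers of a partial operator: `pmapPow S n = Sⁿ` with its natural domain. -/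
def pmapPow (S : H →ₗ.[ℂ] H) : ℕ → (H →ₗ.[ℂ] H)
  | 0 => LinearMap.id.toPMap ⊤
  | n + 1 => pmapComp (pmapPow S n) S

open Classical in
/-- Total (junk-valued) application of the power `Sⁿ`. -/
def powApp (S : H →ₗ.[ℂ] H) (n : ℕ) (x : H) : H :=
  if h : x ∈ (pmapPow S n).domain then (pmapPow S n) ⟨x, h⟩ else 0

/-- The set of `C^∞`-vectors of `S`. -/
def Dinf (S : H →ₗ.[ℂ] H) : Set H := {x | ∀ n : ℕ, x ∈ (pmapPow S n).domain}

/-- `F` is a core of `S`. -/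
def IsCore (S : H →ₗ.[ℂ] H) (F : Submodule ℂ H) : Prop :=
  F ≤ S.domain ∧ (S.graph : Set (H × H)) ⊆ closure ((S.domRestrict F).graph : Set (H × H))

end Operators
section Operators
universe u
variable {H : Type u} [NormedAddCommGroup H] [InnerProductSpace ℂ H]

/-- A normal (unbounded) operator: closed, densely defined, with `D(N*) = D(N)` and
`‖N* x‖ = ‖N x‖` on the common domain. -/
def IsNormalOp [CompleteSpace H] (N : H →ₗ.[ℂ] H) : Prop :=
  Dense (N.domain : Set H) ∧ N.IsClosed ∧ N.adjoint.domain = N.domain ∧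
    ∀ (x : H) (hx : x ∈ N.domain) (hx' : x ∈ N.adjoint.domain),
      ‖N.adjoint ⟨x, hx'⟩‖ = ‖N ⟨x, hx⟩‖

/-- A subnormal operator: densely defined with a normal extension in a possibly
larger Hilbert space. -/
def IsSubnormal {H : Type u} [NormedAddCommGroup H] [InnerProductSpace ℂ H]
    (S : H →ₗ.[ℂ] H) : Prop :=
  Dense (S.domain : Set H) ∧
  ∃ (K : Type u) (_ : NormedAddCommGroup K) (_ : InnerProductSpace ℂ K) (_ : CompleteSpace K)
    (J : H →ₗᵢ[ℂ] K) (N : K →ₗ.[ℂ] K), IsNormalOp N ∧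
      ∀ x : S.domain, ∃ hx : J x ∈ N.domain, N ⟨J x, hx⟩ = J (S x)

/-- A hyponormal operator. -/
def IsHyponormal [CompleteSpace H] (S : H →ₗ.[ℂ] H) : Prop :=
  Dense (S.domain : Set H) ∧
  ∀ (x : H) (hx : x ∈ S.domain), ∃ hx' : x ∈ S.adjoint.domain,
      ‖S.adjoint ⟨x, hx'⟩‖ ≤ ‖S ⟨x, hx⟩‖

end Operators

/-- A directed tree on the vertex set `V`: a connected directed graph without circuits
in which every non-root vertex has a unique parent. -/
structure DirectedTree (V : Type*) where
  edge : V → V → Prop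
  connected : ∀ u v : V, Relation.ReflTransGen (fun a b => edge a b ∨ edge b a) u v
  no_circuits : ∀ v : V, ¬ Relation.TransGen edge v v
  parent_unique : ∀ u v w : V, edge v u → edge w u → v = w

namespace DirectedTree

variable {V : Type*}

/-- The roots: vertices with no incoming edge. -/
def isRoot (T : DirectedTree V) (v : V) : Prop := ¬ ∃ u : V, T.edge u v

/-- `V°`: the non-root vertices, i.e. vertices having a parent. -/
def nonRoot (T : DirectedTree V) (v : V) : Prop := ∃ u : V, T.edge u v

open Classical in
/-- The parent function (with junk value at roots). -/
def par (T : DirectedTree V) (v : V) : V := if h : ∃ u : V, T.edge u v then h.choose else v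

/-- The set of children of a vertex. -/
def chi (T : DirectedTree V) (u : V) : Set V := {v | T.edge u v}

/-- Iterated children `Chi^n(u)`. -/
def chiN (T : DirectedTree V) : ℕ → V → Set V
  | 0, u => {u}
  | n + 1, u => ⋃ w ∈ T.chiN n u, T.chi w

/-- The descendants of `u`. -/
def des (T : DirectedTree V) (u : V) : Set V := ⋃ n : ℕ, T.chiN n u

/-- `T` is leafless: every vertex has a child. -/
def Leafless (T : DirectedTree V) : Prop := ∀ u : V, ∃ v : V, T.edge u v

/-- The product `λ_{u∣v} = ∏_{j=0}^{n-1} λ_{par^j(v)}` of the weights along the path of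
length `n` ending at `v` (for `v ∈ Chi^n(u)` this is the usual `λ_{u∣v}`). -/
def pathProd (T : DirectedTree V) (lam : V → ℂ) (n : ℕ) (v : V) : ℂ :=
  ∏ j ∈ Finset.range n, lam (T.par^[j] v)

open Classical in
/-- The formal weighted-shift transformation `Λ_T` on families of complex numbers. -/
def lamMap (T : DirectedTree V) (lam : V → ℂ) (f : V → ℂ) : V → ℂ :=
  fun v => if T.nonRoot v then lam v * f (T.par v) else 0

variable (T : DirectedTree V)

theorem lamMap_add (lam : V → ℂ) (f g : V → ℂ) :
    T.lamMap lam (f + g) = T.lamMap lam f + T.lamMap lam g := by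
  funext v; simp only [lamMap, Pi.add_apply]; split <;> ring

theorem lamMap_smul (lam : V → ℂ) (c : ℂ) (f : V → ℂ) :
    T.lamMap lam (c • f) = c • T.lamMap lam f := by
  funext v; simp only [lamMap, Pi.smul_apply, smul_eq_mul]; split <;> ring

theorem lamMap_zero (lam : V → ℂ) : T.lamMap lam (0 : V → ℂ) = 0 := by
  funext v; simp [lamMap]

/-- The domain of the weighted shift `S_λ`. -/
def shiftDomain (lam : V → ℂ) : Submodule ℂ (lp (fun _ : V => ℂ) 2) where
  carrier := {f | Memℓp (T.lamMap lam f) 2}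
  zero_mem' := by
    rw [Set.mem_setOf_eq, lp.coeFn_zero, lamMap_zero]
    exact zero_memℓp
  add_mem' := by
    intro f g hf hg
    rw [Set.mem_setOf_eq, lp.coeFn_add, lamMap_add]
    exact hf.add hg
  smul_mem' := by
    intro c f hf
    rw [Set.mem_setOf_eq, lp.coeFn_smul, lamMap_smul]
    exact hf.const_smul c

/-- The weighted shift `S_λ` on the directed tree `T`, as a partial operator in `ℓ²(V)`. -/
def shift (lam : V → ℂ) : lp (fun _ : V => ℂ) 2 →ₗ.[ℂ] lp (fun _ : V => ℂ) 2 where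
  domain := T.shiftDomain lam
  toFun :=
    { toFun := fun f => (⟨T.lamMap lam f, f.2⟩ : lp (fun _ : V => ℂ) 2)
      map_add' := by
        rintro f g
        apply lp.ext
        rw [lp.coeFn_add]
        show T.lamMap lam
            ((((f : lp (fun _ : V => ℂ) 2) : V → ℂ)) + (((g : lp (fun _ : V => ℂ) 2) : V → ℂ)))
          = T.lamMap lam ((f : lp (fun _ : V => ℂ) 2) : V → ℂ)
            + T.lamMap lam ((g : lp (fun _ : V => ℂ) 2) : V → ℂ)
        exact T.lamMap_add lam _ _
      map_smul' := by
        rintro c f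
        apply lp.ext
        rw [lp.coeFn_smul]
        show T.lamMap lam (c • (((f : lp (fun _ : V => ℂ) 2) : V → ℂ)))
          = c • T.lamMap lam ((f : lp (fun _ : V => ℂ) 2) : V → ℂ)
        exact T.lamMap_smul lam c _ }

end DirectedTree

open Classical in
/-- The basis vector `e_u` of `ℓ²(V)`. -/
def eVec {V : Type*} (u : V) : lp (fun _ : V => ℂ) 2 := lp.single 2 u 1

section MoreDefs
universe u
variable {H : Type u} [NormedAddCommGroup H] [InnerProductSpace ℂ H]

/-- The inner product, linear in the FIRST argument (the paper's convention). -/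
def innerPaper (x y : H) : ℂ := inner ℂ y x

/-- The moment sequence `n ↦ ‖Sⁿ f‖²` generated by the vector `f`. -/
def momentSeq (S : H →ₗ.[ℂ] H) (f : H) : ℕ → ℝ := fun n => ‖powApp S n f‖ ^ 2

/-- `f` is a quasi-analytic vector of `S` : `f ∈ D^∞(S)` and
`∑ₙ ‖Sⁿ f‖^{-1/n} = ∞` (with `1/0 = ∞`). -/
def IsQuasiAnalyticVec (S : H →ₗ.[ℂ] H) (f : H) : Prop :=
  (∀ n : ℕ, f ∈ (pmapPow S n).domain) ∧
  ∑' n : ℕ, ((‖powApp S (n + 1) f‖₊ ^ ((1 : ℝ) / (n + 1)) : ℝ≥0) : ℝ≥0∞)⁻¹ = ∞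

end MoreDefs

/-- The consistency condition `μ_u(σ) = ∑_{v ∈ Chi(u)} |λ_v|² ∫_σ (1/s) dμ_v(s) + ε_u δ₀(σ)`
at the vertex `u` (with the convention `1/0 = ∞`). -/
def consistentAt {V : Type*} (T : DirectedTree V) (lam : V → ℂ) (μ : V → MeasureTheory.Measure ℝ≥0)
    (ε : V → ℝ≥0) (u : V) : Prop :=
  ∀ σ : Set ℝ≥0, MeasurableSet σ →
    μ u σ = (∑' v : {v : V // T.edge u v},
        (‖lam (v : V)‖₊ : ℝ≥0∞) ^ 2 * ∫⁻ s in σ, ((s : ℝ≥0∞))⁻¹ ∂(μ (v : V)))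
      + (ε u : ℝ≥0∞) * MeasureTheory.Measure.dirac (0 : ℝ≥0) σ

/-- The sequence `{ϑ, t₀, t₁, t₂, …}` obtained by prepending `ϑ` to `t`. -/
def shiftedSeq (ϑ : ℝ) (t : ℕ → ℝ) : ℕ → ℝ := fun n => match n with
  | 0 => ϑ
  | n + 1 => t n

/-- A positive definite sequence of real numbers. -/
def IsPosDefSeq (t : ℕ → ℝ) : Prop :=
  ∀ (n : ℕ) (α : ℕ → ℂ),
    0 ≤ (∑ k ∈ Finset.range (n + 1), ∑ l ∈ Finset.range (n + 1),
        (t (k + l) : ℂ) * α k * (starRingEnd ℂ) (α l)).re ∧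
    (∑ k ∈ Finset.range (n + 1), ∑ l ∈ Finset.range (n + 1),
        (t (k + l) : ℂ) * α k * (starRingEnd ℂ) (α l)).im = 0

/-! The weighted shift maps `e_u` to `∑_{v ∈ Chi(u)} λ_v e_v`, and the vectors `Sⁿ e_v` for distinct
children `v` are supported on disjoint sets of descendants, so
`‖S^{n+1} e_u‖² = ∑_{v ∈ Chi(u)} |λ_v|² ‖Sⁿ e_v‖²`. On the measure side, the consistency
condition forces `μ_v {0} = 0`, hence `∫ s^{n+1} (1/s) dμ_v = ∫ sⁿ dμ_v`, while the moment of
order `0` of `μ_u` is `1 = ‖e_u‖²` by the choice of `ε_u`. -/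

section PartialPowers

variable {H : Type*} [NormedAddCommGroup H] [InnerProductSpace ℂ H] (S : H →ₗ.[ℂ] H)

lemma powApp_zero (x : H) : powApp S 0 x = x := dif_pos Submodule.mem_top

lemma exists_powApp_succ {n : ℕ} {x : H} (h : x ∈ (pmapPow S (n + 1)).domain) :
    ∃ hS : x ∈ S.domain, S ⟨x, hS⟩ ∈ (pmapPow S n).domain ∧
      powApp S (n + 1) x = powApp S n (S ⟨x, hS⟩) := by
  obtain ⟨hS, hSn⟩ := (Submodule.mem_inf.1 h).1
  refine ⟨hS, hSn, ?_⟩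
  rw [powApp, dif_pos h, powApp, dif_pos hSn]
  rfl

lemma ofReal_momentSeq (f : H) (n : ℕ) :
    ENNReal.ofReal (momentSeq S f n) = (‖powApp S n f‖₊ : ℝ≥0∞) ^ 2 := by
  rw [momentSeq, ENNReal.ofReal_pow (norm_nonneg _), ofReal_norm, enorm_eq_nnnorm]

end PartialPowers

lemma nnnorm_eVec {V : Type*} (u : V) : ‖(eVec u : lp (fun _ : V => ℂ) 2)‖₊ = 1 := by
  ext
  simp [eVec, lp.norm_single]

lemma lp.sq_nnnorm_eq_tsum {α : Type*} {E : α → Type*} [∀ i, NormedAddCommGroup (E i)]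
    (f : lp E 2) : (‖f‖₊ : ℝ≥0∞) ^ 2 = ∑' i, (‖f i‖₊ : ℝ≥0∞) ^ 2 := by
  have h := lp.hasSum_norm (p := 2) (by norm_num) f
  norm_num at h
  have h' : HasSum (fun i => ‖f i‖₊ ^ 2) (‖f‖₊ ^ 2) := by
    rw [← NNReal.hasSum_coe]
    push_cast
    exact h
  exact_mod_cast (ENNReal.tsum_coe_eq h').symm

namespace DirectedTree

variable {V : Type*} (T : DirectedTree V) (lam : V → ℂ)

lemma par_eq_of_edge {u v : V} (h : T.edge u v) : T.par v = u := by
  have hv : ∃ u', T.edge u' v := ⟨u, h⟩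
  rw [par, dif_pos hv]
  exact T.parent_unique v _ u hv.choose_spec h

lemma edge_par_of_nonRoot {v : V} (h : T.nonRoot v) : T.edge (T.par v) v := by
  rw [par, dif_pos (show ∃ u, T.edge u v from h)]
  exact h.choose_spec

open Classical in
def nonRootWeight (v : V) : ℂ := if T.nonRoot v then lam v else 0

lemma lamMap_apply (f : V → ℂ) (w : V) :
    T.lamMap lam f w = T.nonRootWeight lam w * f (T.par w) := by
  unfold lamMap nonRootWeight
  split_ifs <;> simp

lemma iterate_lamMap_apply (n : ℕ) (f : V → ℂ) (w : V) :
    (T.lamMap lam)^[n] f w = T.pathProd (T.nonRootWeight lam) n w * f (T.par^[n] w) := by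
  induction n generalizing w with
  | zero => simp [pathProd]
  | succ n ih =>
    rw [Function.iterate_succ_apply', lamMap_apply, ih, pathProd, pathProd,
      Finset.prod_range_succ']
    simp only [Function.iterate_succ_apply, Function.iterate_zero_apply]
    ring

open Classical in
lemma eVec_apply (u w : V) : (eVec u : lp (fun _ : V => ℂ) 2) w = if w = u then 1 else 0 := by
  by_cases h : w = u
  · subst h
    simp [eVec]
  · rw [if_neg h]
    exact lp.single_apply_ne 2 u _ h

open Classical in
lemma lamMap_eVec (u w : V) :
    T.lamMap lam (eVec u : lp (fun _ : V => ℂ) 2) w = if T.edge u w then lam w else 0 := by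
  rw [lamMap_apply, eVec_apply, nonRootWeight]
  by_cases he : T.edge u w
  · simp [he, T.par_eq_of_edge he, show T.nonRoot w from ⟨u, he⟩]
  · by_cases hw : T.nonRoot w
    · have : T.par w ≠ u := fun hpar => he (hpar ▸ T.edge_par_of_nonRoot hw)
      simp [he, this]
    · simp [he, hw]

lemma coe_powApp_shift {n : ℕ} {f : lp (fun _ : V => ℂ) 2}
    (hf : f ∈ (pmapPow (T.shift lam) n).domain) :
    ⇑(powApp (T.shift lam) n f) = (T.lamMap lam)^[n] ⇑f := by
  induction n generalizing f with
  | zero => rw [powApp_zero, Function.iterate_zero_apply]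
  | succ n ih =>
    obtain ⟨hS, hSn, hpow⟩ := exists_powApp_succ _ hf
    rw [hpow, ih hSn, Function.iterate_succ_apply]
    rfl

/-- At most one child `v` of `u` is an ancestor `par^[n] w` of `w`, which makes the sum over
`Chi(u)` collapse to a single term. -/
lemma sq_nnnorm_iterate_succ_lamMap_eVec (u : V) (n : ℕ) (w : V) :
    (‖(T.lamMap lam)^[n + 1] (eVec u : lp (fun _ : V => ℂ) 2) w‖₊ : ℝ≥0∞) ^ 2
      = ∑' v : {v : V // T.edge u v}, (‖lam v‖₊ : ℝ≥0∞) ^ 2 *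
          (‖(T.lamMap lam)^[n] (eVec (v : V) : lp (fun _ : V => ℂ) 2) w‖₊ : ℝ≥0∞) ^ 2 := by
  classical
  rw [Function.iterate_succ_apply, iterate_lamMap_apply, lamMap_eVec]
  simp only [iterate_lamMap_apply, eVec_apply]
  by_cases he : T.edge u (T.par^[n] w)
  · have hne : ∀ v : {v : V // T.edge u v}, v ≠ ⟨_, he⟩ → T.par^[n] w ≠ v :=
      fun v hv h => hv (Subtype.ext h.symm)
    rw [tsum_eq_single ⟨_, he⟩ fun v hv => by simp [hne v hv]]
    simp [he]
    ring
  · have hne : ∀ v : {v : V // T.edge u v}, T.par^[n] w ≠ v := fun v h => he (h ▸ v.2)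
    simp [he, hne]

theorem sq_nnnorm_powApp_succ_eVec {u : V} {n : ℕ}
    (hu : eVec u ∈ (pmapPow (T.shift lam) (n + 1)).domain)
    (hchi : ∀ v, T.edge u v → eVec v ∈ (pmapPow (T.shift lam) n).domain) :
    (‖powApp (T.shift lam) (n + 1) (eVec u)‖₊ : ℝ≥0∞) ^ 2
      = ∑' v : {v : V // T.edge u v},
          (‖lam v‖₊ : ℝ≥0∞) ^ 2 * (‖powApp (T.shift lam) n (eVec (v : V))‖₊ : ℝ≥0∞) ^ 2 := by
  simp_rw [lp.sq_nnnorm_eq_tsum, T.coe_powApp_shift lam hu, sq_nnnorm_iterate_succ_lamMap_eVec]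
  rw [ENNReal.tsum_comm]
  refine tsum_congr fun v => ?_
  rw [ENNReal.tsum_mul_left, T.coe_powApp_shift lam (hchi v v.2)]

end DirectedTree

section Moments

open Measure

lemma measure_zero_eq_zero_of_lintegral_inv_ne_top {μ : Measure ℝ≥0}
    (h : ∫⁻ s, (s : ℝ≥0∞)⁻¹ ∂μ ≠ ⊤) : μ {0} = 0 := by
  by_contra hne
  refine h (top_le_iff.1 ?_)
  calc ⊤ = ∫⁻ s in {0}, (s : ℝ≥0∞)⁻¹ ∂μ := by simp [hne]
    _ ≤ ∫⁻ s, (s : ℝ≥0∞)⁻¹ ∂μ := setLIntegral_le_lintegral _ _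

lemma lintegral_pow_succ_withDensity_inv {μ : Measure ℝ≥0} (h0 : μ {0} = 0) (n : ℕ) :
    ∫⁻ s, (s : ℝ≥0∞) ^ (n + 1) ∂(μ.withDensity fun s => (s : ℝ≥0∞)⁻¹)
      = ∫⁻ s, (s : ℝ≥0∞) ^ n ∂μ := by
  rw [lintegral_withDensity_eq_lintegral_mul _ (by fun_prop) (by fun_prop)]
  refine lintegral_congr_ae ?_
  filter_upwards [measure_eq_zero_iff_ae_notMem.1 h0] with s hs
  have hs : (s : ℝ≥0∞) ≠ 0 := by simpa using hs
  simp only [Pi.mul_apply]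
  rw [pow_succ', ← mul_assoc, ENNReal.inv_mul_cancel hs ENNReal.coe_ne_top, one_mul]

variable {ι : Type*} (a : ι → ℝ≥0∞) (μ : ι → Measure ℝ≥0) (c : ℝ≥0∞)

lemma lintegral_pow_succ_sum_withDensity_inv_add_dirac
    (h : ∀ i, a i * ∫⁻ s, (s : ℝ≥0∞)⁻¹ ∂μ i ≠ ⊤) (n : ℕ) :
    ∫⁻ s, (s : ℝ≥0∞) ^ (n + 1)
        ∂(sum (fun i => a i • (μ i).withDensity fun s => (s : ℝ≥0∞)⁻¹) + c • dirac (0 : ℝ≥0))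
      = ∑' i, a i * ∫⁻ s, (s : ℝ≥0∞) ^ n ∂μ i := by
  rw [lintegral_add_measure, lintegral_smul_measure, lintegral_sum_measure,
    lintegral_dirac' _ (by fun_prop)]
  simp only [ENNReal.coe_zero, zero_pow n.succ_ne_zero, lintegral_smul_measure, smul_eq_mul,
    mul_zero, add_zero]
  refine tsum_congr fun i => ?_
  rcases eq_or_ne (a i) 0 with ha | ha
  · simp [ha]
  · have hfin : ∫⁻ s, (s : ℝ≥0∞)⁻¹ ∂μ i ≠ ⊤ :=
      fun htop => h i (ENNReal.mul_eq_top.2 (.inl ⟨ha, htop⟩))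
    rw [lintegral_pow_succ_withDensity_inv (measure_zero_eq_zero_of_lintegral_inv_ne_top hfin)]

lemma sum_withDensity_inv_add_dirac_univ
    (h : ∑' i, a i * ∫⁻ s, (s : ℝ≥0∞)⁻¹ ∂μ i ≤ 1) :
    (sum (fun i => a i • (μ i).withDensity fun s => (s : ℝ≥0∞)⁻¹)
      + (1 - ∑' i, a i * ∫⁻ s, (s : ℝ≥0∞)⁻¹ ∂μ i) • dirac (0 : ℝ≥0)) Set.univ = 1 := by
  simp only [Measure.add_apply, sum_apply _ MeasurableSet.univ, Measure.smul_apply, smul_eq_mul,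
    withDensity_apply _ MeasurableSet.univ, Measure.restrict_univ, measure_univ, mul_one]
  exact add_tsub_cancel_of_le h

lemma IsRepMeasure.lintegral_pow {μ : Measure ℝ≥0} {t : ℕ → ℝ} (h : IsRepMeasure μ t) (n : ℕ) :
    ∫⁻ s, (s : ℝ≥0∞) ^ n ∂μ = ENNReal.ofReal (t n) := by
  rw [(h n).2, ofReal_integral_eq_lintegral_ofReal (h n).1 (ae_of_all _ fun s => by positivity)]
  refine lintegral_congr fun s => ?_
  rw [ENNReal.ofReal_pow s.coe_nonneg, ENNReal.ofReal_coe_nnreal]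

lemma IsRepMeasure.isStieltjesMoment {μ : Measure ℝ≥0} {t : ℕ → ℝ} (h : IsRepMeasure μ t) :
    IsStieltjesMoment t :=
  ⟨μ, h⟩

lemma isRepMeasure_of_lintegral_pow {μ : Measure ℝ≥0} {t : ℕ → ℝ} (ht : ∀ n, 0 ≤ t n)
    (h : ∀ n, ∫⁻ s, (s : ℝ≥0∞) ^ n ∂μ = ENNReal.ofReal (t n)) : IsRepMeasure μ t := by
  intro n
  have hmeas : AEStronglyMeasurable (fun s : ℝ≥0 => (s : ℝ) ^ n) μ :=
    (NNReal.continuous_coe.pow n).aestronglyMeasurable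
  have hlint : ∫⁻ s, ENNReal.ofReal ((s : ℝ) ^ n) ∂μ = ENNReal.ofReal (t n) := by
    rw [← h n]
    refine lintegral_congr fun s => ?_
    rw [ENNReal.ofReal_pow s.coe_nonneg, ENNReal.ofReal_coe_nnreal]
  refine ⟨⟨hmeas, ?_⟩, ?_⟩
  · rw [hasFiniteIntegral_iff_ofReal (ae_of_all _ fun s => by positivity), hlint]
    exact ENNReal.ofReal_lt_top
  · rw [integral_eq_lintegral_of_nonneg_ae (ae_of_all _ fun s => by positivity) hmeas, hlint,
      ENNReal.toReal_ofReal (ht n)]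

end Moments

theorem stmt8_general {V : Type*} (T : DirectedTree V) (lam : V → ℂ)
    (hdom : (Submodule.span ℂ (Set.range (eVec (V := V))) : Set (lp (fun _ : V => ℂ) 2)) ⊆ Dinf (T.shift lam))
    (u : V)
    (μ : V → Measure ℝ≥0)
    (hrep : ∀ v : V, T.edge u v → IsRepMeasure (μ v) (momentSeq (T.shift lam) (eVec v)))
    (hcons : (∑' v : {v : V // T.edge u v},
        (‖lam (v : V)‖₊ : ℝ≥0∞) ^ 2 * ∫⁻ s, ((s : ℝ≥0∞))⁻¹ ∂(μ (v : V))) ≤ 1) :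
    IsStieltjesMoment (momentSeq (T.shift lam) (eVec u))
    ∧ IsRepMeasure
      (Measure.sum (fun v : {v : V // T.edge u v} =>
          ((‖lam (v : V)‖₊ : ℝ≥0∞) ^ 2) • ((μ (v : V)).withDensity fun s => ((s : ℝ≥0∞))⁻¹))
        + (1 - ∑' v : {v : V // T.edge u v},
            (‖lam (v : V)‖₊ : ℝ≥0∞) ^ 2 * ∫⁻ s, ((s : ℝ≥0∞))⁻¹ ∂(μ (v : V)))
          • Measure.dirac (0 : ℝ≥0))
      (momentSeq (T.shift lam) (eVec u)) := by
  have he : ∀ v m, eVec v ∈ (pmapPow (T.shift lam) m).domain :=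
    fun v => hdom (Submodule.subset_span ⟨v, rfl⟩)
  have hfin : ∀ v : {v : V // T.edge u v},
      (‖lam (v : V)‖₊ : ℝ≥0∞) ^ 2 * ∫⁻ s, (s : ℝ≥0∞)⁻¹ ∂(μ v) ≠ ⊤ :=
    fun v => ne_top_of_le_ne_top ENNReal.one_ne_top ((ENNReal.le_tsum v).trans hcons)
  refine (and_iff_right_of_imp IsRepMeasure.isStieltjesMoment).2 ?_
  refine isRepMeasure_of_lintegral_pow (fun n => sq_nonneg _) fun n => ?_
  rw [ofReal_momentSeq]
  cases n with
  | zero =>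
    simp only [pow_zero, lintegral_one]
    rw [sum_withDensity_inv_add_dirac_univ _ _ hcons, powApp_zero, nnnorm_eVec, ENNReal.coe_one,
      one_pow]
  | succ n =>
    rw [lintegral_pow_succ_sum_withDensity_inv_add_dirac _ _ _ hfin,
      T.sq_nnnorm_powApp_succ_eVec lam (he u _) fun v _ => he v n]
    exact tsum_congr fun v => by rw [(hrep v v.2).lintegral_pow, ofReal_momentSeq]

/-- the consistency condition at `u` implies that `u` generates a Stieltjes
moment sequence, with the explicitly given representing measure. -/
theorem stmt8 {V : Type*} (T : DirectedTree V) (lam : V → ℂ)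
    (hdom : (Submodule.span ℂ (Set.range (eVec (V := V))) : Set (lp (fun _ : V => ℂ) 2)) ⊆ Dinf (T.shift lam))
    (u : V) (hu : ∃ v : V, T.edge u v)
    (μ : V → Measure ℝ≥0)
    (hrep : ∀ v : V, T.edge u v → IsRepMeasure (μ v) (momentSeq (T.shift lam) (eVec v)))
    (hcons : (∑' v : {v : V // T.edge u v},
        (‖lam (v : V)‖₊ : ℝ≥0∞) ^ 2 * ∫⁻ s, ((s : ℝ≥0∞))⁻¹ ∂(μ (v : V))) ≤ 1) :
    IsStieltjesMoment (momentSeq (T.shift lam) (eVec u))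
    ∧ IsRepMeasure
      (Measure.sum (fun v : {v : V // T.edge u v} =>
          ((‖lam (v : V)‖₊ : ℝ≥0∞) ^ 2) • ((μ (v : V)).withDensity fun s => ((s : ℝ≥0∞))⁻¹))
        + (1 - ∑' v : {v : V // T.edge u v},
            (‖lam (v : V)‖₊ : ℝ≥0∞) ^ 2 * ∫⁻ s, ((s : ℝ≥0∞))⁻¹ ∂(μ (v : V)))
          • Measure.dirac (0 : ℝ≥0))
      (momentSeq (T.shift lam) (eVec u)) :=
  stmt8_general T lam hdom u μ hrep hcons
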